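/- (Theorem 4.3: geodesic equations under a conformal map.) Let Φ and Φ̃ be conformally related with dilation factor δ, and let u, v : ℝ → ℝ be smooth. Then for each s, the pair of equations u'' + Γ̃¹₁₁u'² + 2Γ̃¹₁₂u'v' + Γ̃¹₂₂v'² = 0 and v'' + Γ̃²₁₁u'² + 2Γ̃²₁₂u'v' + Γ̃²₂₂v'² = 0 (the geodesic equations of Φ̃) holds if and only if u'' + Γ¹₁₁u'² + 2Γ¹₁₂u'v' + Γ¹₂₂v'² + (ϑ¹₁₁u'² + 2ϑ¹₁₂u'v' + ϑ¹₂₂v'²) = 0 and v'' + Γ²₁₁u'² + 2Γ²₁₂u'v' + Γ²₂₂v'² + (ϑ²₁₁u'² + 2ϑ²₁₂u'v' + ϑ²₂₂v'²) = 0, all quantities on ℝ² evaluated at (u(s),v(s)). -/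

import Mathlib

noncomputable section
open Matrix

/-- Partial derivative in the first (`u`) direction. -/
def pu {E : Type*} [NormedAddCommGroup E] [NormedSpace ℝ E] (f : ℝ × ℝ → E) (p : ℝ × ℝ) : E :=
  fderiv ℝ f p (1, 0)

/-- Partial derivative in the second (`v`) direction. -/
def pv {E : Type*} [NormedAddCommGroup E] [NormedSpace ℝ E] (f : ℝ × ℝ → E) (p : ℝ × ℝ) : E :=
  fderiv ℝ f p (0, 1)

/-- Euclidean norm on `Fin 3 → ℝ`. -/
def enorm3 (x : Fin 3 → ℝ) : ℝ := Real.sqrt (x ⬝ᵥ x)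


lemma contDiff_pu {f : ℝ × ℝ → Fin 3 → ℝ} (hf : ContDiff ℝ (⊤ : ℕ∞) f) : ContDiff ℝ (⊤ : ℕ∞) (pu f) :=
  (hf.fderiv_right (by simp)).clm_apply contDiff_const

lemma contDiff_pv {f : ℝ × ℝ → Fin 3 → ℝ} (hf : ContDiff ℝ (⊤ : ℕ∞) f) : ContDiff ℝ (⊤ : ℕ∞) (pv f) :=
  (hf.fderiv_right (by simp)).clm_apply contDiff_const

lemma contDiff_dot {f g : ℝ × ℝ → Fin 3 → ℝ} (hf : ContDiff ℝ (⊤ : ℕ∞) f) (hg : ContDiff ℝ (⊤ : ℕ∞) g) :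
    ContDiff ℝ (⊤ : ℕ∞) (fun p => f p ⬝ᵥ g p) := by
  simp only [dotProduct]
  exact ContDiff.sum fun i _ =>
    (((ContinuousLinearMap.proj (R := ℝ) (φ := fun _ : Fin 3 => ℝ) i).contDiff).comp hf).mul
      (((ContinuousLinearMap.proj (R := ℝ) (φ := fun _ : Fin 3 => ℝ) i).contDiff).comp hg)

lemma pu_mul {f g : ℝ × ℝ → ℝ} {p : ℝ × ℝ} (hf : DifferentiableAt ℝ f p)
    (hg : DifferentiableAt ℝ g p) :
    pu (fun q => f q * g q) p = pu f p * g p + f p * pu g p := by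
  unfold pu
  rw [fderiv_fun_mul hf hg]
  simp only [ContinuousLinearMap.add_apply, ContinuousLinearMap.smul_apply, smul_eq_mul]
  ring

lemma pv_mul {f g : ℝ × ℝ → ℝ} {p : ℝ × ℝ} (hf : DifferentiableAt ℝ f p)
    (hg : DifferentiableAt ℝ g p) :
    pv (fun q => f q * g q) p = pv f p * g p + f p * pv g p := by
  unfold pv
  rw [fderiv_fun_mul hf hg]
  simp only [ContinuousLinearMap.add_apply, ContinuousLinearMap.smul_apply, smul_eq_mul]
  ring

theorem geodesic_equations_under_conformal_map
    (Φ : ℝ × ℝ → Fin 3 → ℝ) (hΦ : ContDiff ℝ (⊤ : ℕ∞) Φ)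
    (E F G : ℝ × ℝ → ℝ)
    (hE : ∀ p, E p = pu Φ p ⬝ᵥ pu Φ p) (hF : ∀ p, F p = pu Φ p ⬝ᵥ pv Φ p)
    (hG : ∀ p, G p = pv Φ p ⬝ᵥ pv Φ p)
    (hW : ∀ p, 0 < E p * G p - F p ^ 2)
    (Γ111 Γ211 Γ112 Γ212 Γ122 Γ222 : ℝ × ℝ → ℝ)
    (hΓ111 : ∀ p, Γ111 p =
      (G p * pu E p - 2 * F p * pu F p + F p * pv E p) / (2 * (E p * G p - F p ^ 2)))
    (hΓ211 : ∀ p, Γ211 p =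
      (2 * E p * pu F p - E p * pv E p - F p * pu E p) / (2 * (E p * G p - F p ^ 2)))
    (hΓ112 : ∀ p, Γ112 p =
      (G p * pv E p - F p * pu G p) / (2 * (E p * G p - F p ^ 2)))
    (hΓ212 : ∀ p, Γ212 p =
      (E p * pu G p - F p * pv E p) / (2 * (E p * G p - F p ^ 2)))
    (hΓ122 : ∀ p, Γ122 p =
      (2 * G p * pv F p - G p * pu G p - F p * pv G p) / (2 * (E p * G p - F p ^ 2)))
    (hΓ222 : ∀ p, Γ222 p =
      (E p * pv G p - 2 * F p * pv F p + F p * pu G p) / (2 * (E p * G p - F p ^ 2)))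
    (Φt : ℝ × ℝ → Fin 3 → ℝ) (hΦt : ContDiff ℝ (⊤ : ℕ∞) Φt)
    (Et Ft Gt : ℝ × ℝ → ℝ)
    (hEt : ∀ p, Et p = pu Φt p ⬝ᵥ pu Φt p) (hFt : ∀ p, Ft p = pu Φt p ⬝ᵥ pv Φt p)
    (hGt : ∀ p, Gt p = pv Φt p ⬝ᵥ pv Φt p)
    (Γt111 Γt211 Γt112 Γt212 Γt122 Γt222 : ℝ × ℝ → ℝ)
    (hΓt111 : ∀ p, Γt111 p =
      (Gt p * pu Et p - 2 * Ft p * pu Ft p + Ft p * pv Et p) / (2 * (Et p * Gt p - Ft p ^ 2)))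
    (hΓt211 : ∀ p, Γt211 p =
      (2 * Et p * pu Ft p - Et p * pv Et p - Ft p * pu Et p) / (2 * (Et p * Gt p - Ft p ^ 2)))
    (hΓt112 : ∀ p, Γt112 p =
      (Gt p * pv Et p - Ft p * pu Gt p) / (2 * (Et p * Gt p - Ft p ^ 2)))
    (hΓt212 : ∀ p, Γt212 p =
      (Et p * pu Gt p - Ft p * pv Et p) / (2 * (Et p * Gt p - Ft p ^ 2)))
    (hΓt122 : ∀ p, Γt122 p =
      (2 * Gt p * pv Ft p - Gt p * pu Gt p - Ft p * pv Gt p) / (2 * (Et p * Gt p - Ft p ^ 2)))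
    (hΓt222 : ∀ p, Γt222 p =
      (Et p * pv Gt p - 2 * Ft p * pv Ft p + Ft p * pu Gt p) / (2 * (Et p * Gt p - Ft p ^ 2)))
    (δ : ℝ × ℝ → ℝ) (hδ : ContDiff ℝ (⊤ : ℕ∞) δ) (hδpos : ∀ p, 0 < δ p)
    (hcE : ∀ p, Et p = δ p ^ 2 * E p) (hcF : ∀ p, Ft p = δ p ^ 2 * F p)
    (hcG : ∀ p, Gt p = δ p ^ 2 * G p)
    (ϑ111 ϑ211 ϑ112 ϑ212 ϑ122 ϑ222 : ℝ × ℝ → ℝ)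
    (hϑ111 : ∀ p, ϑ111 p =
      (E p * G p * pu δ p - 2 * F p ^ 2 * pu δ p + E p * F p * pv δ p) / (δ p * (E p * G p - F p ^ 2)))
    (hϑ211 : ∀ p, ϑ211 p = (E p * F p * pu δ p - E p ^ 2 * pv δ p) / (δ p * (E p * G p - F p ^ 2)))
    (hϑ112 : ∀ p, ϑ112 p = (E p * G p * pv δ p - F p * G p * pu δ p) / (δ p * (E p * G p - F p ^ 2)))
    (hϑ212 : ∀ p, ϑ212 p = (E p * G p * pu δ p - E p * F p * pv δ p) / (δ p * (E p * G p - F p ^ 2)))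
    (hϑ122 : ∀ p, ϑ122 p = (F p * G p * pv δ p - G p ^ 2 * pu δ p) / (δ p * (E p * G p - F p ^ 2)))
    (hϑ222 : ∀ p, ϑ222 p =
      (E p * G p * pv δ p - 2 * F p ^ 2 * pv δ p + F p * G p * pu δ p) / (δ p * (E p * G p - F p ^ 2)))
    (u v : ℝ → ℝ) (hu : ContDiff ℝ (⊤ : ℕ∞) u) (hv : ContDiff ℝ (⊤ : ℕ∞) v)
    :
    ∀ s, (deriv (deriv u) s + Γt111 (u s, v s) * (deriv u s) ^ 2 +
          2 * Γt112 (u s, v s) * deriv u s * deriv v s +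
          Γt122 (u s, v s) * (deriv v s) ^ 2 = 0 ∧
        deriv (deriv v) s + Γt211 (u s, v s) * (deriv u s) ^ 2 +
          2 * Γt212 (u s, v s) * deriv u s * deriv v s +
          Γt222 (u s, v s) * (deriv v s) ^ 2 = 0) ↔
      (deriv (deriv u) s + Γ111 (u s, v s) * (deriv u s) ^ 2 +
          2 * Γ112 (u s, v s) * deriv u s * deriv v s +
          Γ122 (u s, v s) * (deriv v s) ^ 2 +
          (ϑ111 (u s, v s) * (deriv u s) ^ 2 +
           2 * ϑ112 (u s, v s) * deriv u s * deriv v s +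
           ϑ122 (u s, v s) * (deriv v s) ^ 2) = 0 ∧
        deriv (deriv v) s + Γ211 (u s, v s) * (deriv u s) ^ 2 +
          2 * Γ212 (u s, v s) * deriv u s * deriv v s +
          Γ222 (u s, v s) * (deriv v s) ^ 2 +
          (ϑ211 (u s, v s) * (deriv u s) ^ 2 +
           2 * ϑ212 (u s, v s) * deriv u s * deriv v s +
           ϑ222 (u s, v s) * (deriv v s) ^ 2) = 0) := by
  
  -- smoothness of the fundamental form coefficients
  have hEeq : E = fun p => pu Φ p ⬝ᵥ pu Φ p := funext hE
  have hFeq : F = fun p => pu Φ p ⬝ᵥ pv Φ p := funext hF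
  have hGeq : G = fun p => pv Φ p ⬝ᵥ pv Φ p := funext hG
  have hEs : ContDiff ℝ (⊤ : ℕ∞) E := by rw [hEeq]; exact contDiff_dot (contDiff_pu hΦ) (contDiff_pu hΦ)
  have hFs : ContDiff ℝ (⊤ : ℕ∞) F := by rw [hFeq]; exact contDiff_dot (contDiff_pu hΦ) (contDiff_pv hΦ)
  have hGs : ContDiff ℝ (⊤ : ℕ∞) G := by rw [hGeq]; exact contDiff_dot (contDiff_pv hΦ) (contDiff_pv hΦ)
  have hδd : ∀ p, DifferentiableAt ℝ δ p := fun p => (hδ.differentiable (by simp)) p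
  have hEd : ∀ p, DifferentiableAt ℝ E p := fun p => (hEs.differentiable (by simp)) p
  have hFd : ∀ p, DifferentiableAt ℝ F p := fun p => (hFs.differentiable (by simp)) p
  have hGd : ∀ p, DifferentiableAt ℝ G p := fun p => (hGs.differentiable (by simp)) p
  -- derivative of δ² X for X ∈ {E,F,G}
  have keyu : ∀ (X : ℝ × ℝ → ℝ), (∀ p, DifferentiableAt ℝ X p) → ∀ p,
      pu (fun q => δ q ^ 2 * X q) p = 2 * δ p * pu δ p * X p + δ p ^ 2 * pu X p := by
    intro X hXd p
    have h1 : (fun q => δ q ^ 2 * X q) = fun q => δ q * (δ q * X q) := by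
      funext q; ring
    rw [h1, pu_mul (g := fun q => δ q * X q) (hδd p) (((hδd p).mul (hXd p))), pu_mul (hδd p) (hXd p)]
    ring
  have keyv : ∀ (X : ℝ × ℝ → ℝ), (∀ p, DifferentiableAt ℝ X p) → ∀ p,
      pv (fun q => δ q ^ 2 * X q) p = 2 * δ p * pv δ p * X p + δ p ^ 2 * pv X p := by
    intro X hXd p
    have h1 : (fun q => δ q ^ 2 * X q) = fun q => δ q * (δ q * X q) := by
      funext q; ring
    rw [h1, pv_mul (g := fun q => δ q * X q) (hδd p) (((hδd p).mul (hXd p))), pv_mul (hδd p) (hXd p)]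
    ring
  have hEteq : Et = fun q => δ q ^ 2 * E q := funext hcE
  have hFteq : Ft = fun q => δ q ^ 2 * F q := funext hcF
  have hGteq : Gt = fun q => δ q ^ 2 * G q := funext hcG
  have hpuEt : ∀ p, pu Et p = 2 * δ p * pu δ p * E p + δ p ^ 2 * pu E p := by
    rw [hEteq]; exact keyu E hEd
  have hpvEt : ∀ p, pv Et p = 2 * δ p * pv δ p * E p + δ p ^ 2 * pv E p := by
    rw [hEteq]; exact keyv E hEd
  have hpuFt : ∀ p, pu Ft p = 2 * δ p * pu δ p * F p + δ p ^ 2 * pu F p := by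
    rw [hFteq]; exact keyu F hFd
  have hpvFt : ∀ p, pv Ft p = 2 * δ p * pv δ p * F p + δ p ^ 2 * pv F p := by
    rw [hFteq]; exact keyv F hFd
  have hpuGt : ∀ p, pu Gt p = 2 * δ p * pu δ p * G p + δ p ^ 2 * pu G p := by
    rw [hGteq]; exact keyu G hGd
  have hpvGt : ∀ p, pv Gt p = 2 * δ p * pv δ p * G p + δ p ^ 2 * pv G p := by
    rw [hGteq]; exact keyv G hGd
  have hδne : ∀ p, δ p ≠ 0 := fun p => ne_of_gt (hδpos p)
  have hWne : ∀ p, E p * G p - F p ^ 2 ≠ 0 := fun p => ne_of_gt (hW p)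
  -- Christoffel symbols transform by adding the ϑ terms
  have c111 : ∀ p, Γt111 p = Γ111 p + ϑ111 p := by
    intro p
    rw [hΓt111, hΓ111, hϑ111, hpuEt, hpvEt, hpuFt, hcE, hcF, hcG,
      show δ p ^ 2 * E p * (δ p ^ 2 * G p) - (δ p ^ 2 * F p) ^ 2
          = δ p ^ 4 * (E p * G p - F p ^ 2) by ring]
    rw [div_add_div _ _ (mul_ne_zero two_ne_zero (hWne p)) (mul_ne_zero (hδne p) (hWne p)),
      div_eq_div_iff
        (mul_ne_zero two_ne_zero (mul_ne_zero (pow_ne_zero 4 (hδne p)) (hWne p)))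
        (mul_ne_zero (mul_ne_zero two_ne_zero (hWne p)) (mul_ne_zero (hδne p) (hWne p)))]
    ring
  have c211 : ∀ p, Γt211 p = Γ211 p + ϑ211 p := by
    intro p
    rw [hΓt211, hΓ211, hϑ211, hpuEt, hpvEt, hpuFt, hcE, hcF, hcG,
      show δ p ^ 2 * E p * (δ p ^ 2 * G p) - (δ p ^ 2 * F p) ^ 2
          = δ p ^ 4 * (E p * G p - F p ^ 2) by ring]
    rw [div_add_div _ _ (mul_ne_zero two_ne_zero (hWne p)) (mul_ne_zero (hδne p) (hWne p)),
      div_eq_div_iff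
        (mul_ne_zero two_ne_zero (mul_ne_zero (pow_ne_zero 4 (hδne p)) (hWne p)))
        (mul_ne_zero (mul_ne_zero two_ne_zero (hWne p)) (mul_ne_zero (hδne p) (hWne p)))]
    ring
  have c112 : ∀ p, Γt112 p = Γ112 p + ϑ112 p := by
    intro p
    rw [hΓt112, hΓ112, hϑ112, hpvEt, hpuGt, hcE, hcF, hcG,
      show δ p ^ 2 * E p * (δ p ^ 2 * G p) - (δ p ^ 2 * F p) ^ 2
          = δ p ^ 4 * (E p * G p - F p ^ 2) by ring]
    rw [div_add_div _ _ (mul_ne_zero two_ne_zero (hWne p)) (mul_ne_zero (hδne p) (hWne p)),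
      div_eq_div_iff
        (mul_ne_zero two_ne_zero (mul_ne_zero (pow_ne_zero 4 (hδne p)) (hWne p)))
        (mul_ne_zero (mul_ne_zero two_ne_zero (hWne p)) (mul_ne_zero (hδne p) (hWne p)))]
    ring
  have c212 : ∀ p, Γt212 p = Γ212 p + ϑ212 p := by
    intro p
    rw [hΓt212, hΓ212, hϑ212, hpvEt, hpuGt, hcE, hcF, hcG,
      show δ p ^ 2 * E p * (δ p ^ 2 * G p) - (δ p ^ 2 * F p) ^ 2
          = δ p ^ 4 * (E p * G p - F p ^ 2) by ring]
    rw [div_add_div _ _ (mul_ne_zero two_ne_zero (hWne p)) (mul_ne_zero (hδne p) (hWne p)),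
      div_eq_div_iff
        (mul_ne_zero two_ne_zero (mul_ne_zero (pow_ne_zero 4 (hδne p)) (hWne p)))
        (mul_ne_zero (mul_ne_zero two_ne_zero (hWne p)) (mul_ne_zero (hδne p) (hWne p)))]
    ring
  have c122 : ∀ p, Γt122 p = Γ122 p + ϑ122 p := by
    intro p
    rw [hΓt122, hΓ122, hϑ122, hpuGt, hpvGt, hpvFt, hcE, hcF, hcG,
      show δ p ^ 2 * E p * (δ p ^ 2 * G p) - (δ p ^ 2 * F p) ^ 2
          = δ p ^ 4 * (E p * G p - F p ^ 2) by ring]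
    rw [div_add_div _ _ (mul_ne_zero two_ne_zero (hWne p)) (mul_ne_zero (hδne p) (hWne p)),
      div_eq_div_iff
        (mul_ne_zero two_ne_zero (mul_ne_zero (pow_ne_zero 4 (hδne p)) (hWne p)))
        (mul_ne_zero (mul_ne_zero two_ne_zero (hWne p)) (mul_ne_zero (hδne p) (hWne p)))]
    ring
  have c222 : ∀ p, Γt222 p = Γ222 p + ϑ222 p := by
    intro p
    rw [hΓt222, hΓ222, hϑ222, hpuGt, hpvGt, hpvFt, hcE, hcF, hcG,
      show δ p ^ 2 * E p * (δ p ^ 2 * G p) - (δ p ^ 2 * F p) ^ 2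
          = δ p ^ 4 * (E p * G p - F p ^ 2) by ring]
    rw [div_add_div _ _ (mul_ne_zero two_ne_zero (hWne p)) (mul_ne_zero (hδne p) (hWne p)),
      div_eq_div_iff
        (mul_ne_zero two_ne_zero (mul_ne_zero (pow_ne_zero 4 (hδne p)) (hWne p)))
        (mul_ne_zero (mul_ne_zero two_ne_zero (hWne p)) (mul_ne_zero (hδne p) (hWne p)))]
    ring
  intro s
  rw [c111, c211, c112, c212, c122, c222]
  constructor <;> rintro ⟨h1, h2⟩ <;>
    exact ⟨by linear_combination h1, by linear_combination h2⟩
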